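/- arXiv:2604.11245 — 4 statements merged into one kernel-verified Lean document; each statement's English description precedes it below -/
import Mathlib

section
/- There exists a seat over the semiring K = (ℕ ∪ {∞}, min, +, ∞, 0) and a resource a ∈ K such that Int_a(X) ≠ X, i.e., the weighted interior operator Int_a does not satisfy the top-preservation property of a Kuratowski interior operator. -/
open Set Topology

/-- A semiring-annotated topological space (seat). -/
structure Seat (X : Type*) (K : Type*) [TopologicalSpace X] [Semiring K] where
  A : Set X → X → Set K
  strengthen : ∀ ⦃U : Set X⦄, IsOpen U → ∀ (x : X) (a b : K),
      a ∈ A U x → a * b ∈ A U x ∧ b * a ∈ A U x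
  weaken : ∀ ⦃U V : Set X⦄, IsOpen U → IsOpen V → U ⊆ V → ∀ x : X, A U x ⊆ A V x
  choice : ∀ ⦃U : Set X⦄, IsOpen U → ∀ (x : X) (a b : K),
      a ∈ A U x → b ∈ A U x → a + b ∈ A U x
  combine : ∀ ⦃U V : Set X⦄, IsOpen U → IsOpen V → ∀ (x : X) (a b : K),
      a ∈ A U x → b ∈ A V x → a * b ∈ A (U ∩ V) x
  zero_univ : ∀ x : X, (0 : K) ∈ A Set.univ x

variable {X K : Type*} [TopologicalSpace X] [Semiring K]

/-- `For_a(P)`: states where evidence supporting `P` is accessible using resource `a`. -/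
def Seat.For (S : Seat X K) (a : K) (P : Set X) : Set X :=
  {x | ∃ U : Set X, IsOpen U ∧ U ⊆ P ∧ a ∈ S.A U x}

/-- Weighted interior `Int_a(P)`. -/
def Seat.Inta (S : Seat X K) (a : K) (P : Set X) : Set X :=
  {x | ∃ U : Set X, IsOpen U ∧ x ∈ U ∧ U ⊆ P ∧ a ∈ S.A U x}

/-- There is a seat over the tropical semiring `(ℕ∞, min, +, ∞, 0)` and a resource `a`
such that `Int_a(X) ≠ X`. -/
theorem Inta_not_top_preserving :
    ∃ (Y : Type) (t : TopologicalSpace Y)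
      (S : @Seat Y (Tropical ℕ∞) t _) (a : Tropical ℕ∞),
      @Seat.Inta Y (Tropical ℕ∞) t _ S a Set.univ ≠ Set.univ := by
  refine ⟨Unit, ⊥, ?_, 1, ?_⟩
  · exact
      { A := fun _ _ => {b | 1 ≤ b.untrop}
        strengthen := fun U _ x a b ha => by
          constructor <;> simp only [Set.mem_setOf_eq, Tropical.untrop_mul] at *
          · exact le_trans ha le_self_add
          · exact le_trans ha le_add_self
        weaken := fun U V _ _ _ x => le_refl _
        choice := fun U _ x a b ha hb => by
          simp only [Set.mem_setOf_eq, Tropical.untrop_add] at *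
          exact le_min ha hb
        combine := fun U V _ _ x a b ha hb => by
          simp only [Set.mem_setOf_eq, Tropical.untrop_mul] at *
          exact le_trans ha le_self_add
        zero_univ := fun x => by
          simp [Tropical.untrop_zero] }
  · intro h
    have hx : (() : Unit) ∈ (Set.univ : Set Unit) := Set.mem_univ _
    rw [← h] at hx
    obtain ⟨U, _, _, _, ha⟩ := hx
    simp [Tropical.untrop_one] at ha
end

section
/- A K-seat validates the formula scheme F_{a⊕b} φ → F_a φ ∧ F_b φ (for all a, b ∈ K) if and only if it is strong, i.e., a ⊕ b ∈ A(U,x) implies a ∈ A(U,x) and b ∈ A(U,x) for all opens U and points x. Semantically: a seat is strong iff for every valuation, every point x, every P ⊆ X and all a, b ∈ K, x ∈ For_{a⊕b}(P) implies x ∈ For_a(P) ∩ For_b(P). -/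
open Set Topology

variable {X K : Type*} [TopologicalSpace X] [Semiring K]

/-- A seat validates `F_{a⊕b} φ → F_a φ ∧ F_b φ` iff it is strong. -/
theorem strong_iff_validates (S : Seat X K) :
    (∀ (P : Set X) (x : X) (a b : K),
        x ∈ S.For (a + b) P → x ∈ S.For a P ∩ S.For b P) ↔
    (∀ U : Set X, IsOpen U → ∀ (x : X) (a b : K),
        a + b ∈ S.A U x → a ∈ S.A U x ∧ b ∈ S.A U x) := by
  constructor
  · intro h U hU x a b hab
    obtain ⟨⟨V, hV, hVU, haV⟩, ⟨W, hW, hWU, hbW⟩⟩ :=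
      h U x a b ⟨U, hU, le_refl U, hab⟩
    exact ⟨S.weaken hV hU hVU x haV, S.weaken hW hU hWU x hbW⟩
  · rintro h P x a b ⟨U, hU, hUP, hab⟩
    obtain ⟨ha, hb⟩ := h U hU x a b hab
    exact ⟨⟨U, hU, hUP, ha⟩, ⟨U, hU, hUP, hb⟩⟩
end

section
/- The class of uniform K-seats is not closed under disjoint unions (for K the tropical semiring on ℚ≥0 ∪ {∞}), and hence is not definable by any formula of the basic language L_K: there exist two uniform K-seats whose disjoint union is not uniform. -/
open Set Topology

variable {X K : Type*} [TopologicalSpace X] [Semiring K]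

/-- A seat is uniform if annotations do not depend on the state. -/
def SeatUniform {Y : Type*} [TopologicalSpace Y] (S : Seat Y K) : Prop :=
  ∀ U : Set Y, IsOpen U → ∀ x y : Y, S.A U x = S.A U y

/-- The seat whose annotation is always everything. -/
def fullSeat {Y K : Type*} [TopologicalSpace Y] [Semiring K] : Seat Y K where
  A _ _ := Set.univ
  strengthen _ _ _ _ _ _ := ⟨trivial, trivial⟩
  weaken _ _ _ _ _ _ _ _ := trivial
  choice _ _ _ _ _ _ _ := trivial
  combine _ _ _ _ _ _ _ _ _ := trivial
  zero_univ _ := trivial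

/-- The seat whose annotation is always `{0}`. -/
def zeroSeat {Y K : Type*} [TopologicalSpace Y] [Semiring K] : Seat Y K where
  A _ _ := {0}
  strengthen _ _ _ a b ha := by
    simp only [Set.mem_singleton_iff] at *
    subst ha; exact ⟨zero_mul b, mul_zero b⟩
  weaken _ _ _ _ _ _ _ h := h
  choice _ _ _ a b ha hb := by
    simp only [Set.mem_singleton_iff] at *
    subst ha; subst hb; exact zero_add 0
  combine _ _ _ _ _ a b ha hb := by
    simp only [Set.mem_singleton_iff] at *
    subst ha; exact zero_mul b
  zero_univ _ := rfl

/-- Disjoint union of two seats. -/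
def sumSeat {Y₁ Y₂ K : Type*} [TopologicalSpace Y₁] [TopologicalSpace Y₂] [Semiring K]
    (S₁ : Seat Y₁ K) (S₂ : Seat Y₂ K) : Seat (Y₁ ⊕ Y₂) K where
  A U := Sum.elim (fun x => S₁.A (Sum.inl ⁻¹' U) x) (fun y => S₂.A (Sum.inr ⁻¹' U) y)
  strengthen U hU x a b ha := by
    cases x with
    | inl x => exact S₁.strengthen (hU.preimage continuous_inl) x a b ha
    | inr y => exact S₂.strengthen (hU.preimage continuous_inr) y a b ha
  weaken U V hU hV hUV x := by
    cases x with
    | inl x => exact S₁.weaken (hU.preimage continuous_inl) (hV.preimage continuous_inl) (Set.preimage_mono hUV) x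
    | inr y => exact S₂.weaken (hU.preimage continuous_inr) (hV.preimage continuous_inr) (Set.preimage_mono hUV) y
  choice U hU x a b ha hb := by
    cases x with
    | inl x => exact S₁.choice (hU.preimage continuous_inl) x a b ha hb
    | inr y => exact S₂.choice (hU.preimage continuous_inr) y a b ha hb
  combine U V hU hV x a b ha hb := by
    cases x with
    | inl x => exact S₁.combine (hU.preimage continuous_inl) (hV.preimage continuous_inl) x a b ha hb
    | inr y => exact S₂.combine (hU.preimage continuous_inr) (hV.preimage continuous_inr) y a b ha hb
  zero_univ x := by
    cases x with
    | inl x => exact S₁.zero_univ x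
    | inr y => exact S₂.zero_univ y

/-- The class of uniform seats over the tropical semiring on `ℚ≥0 ∪ {∞}` is not closed
under disjoint unions: there are two uniform seats whose disjoint union is not uniform. -/
theorem uniform_not_closed_disjointUnion :
    ∃ (X₁ X₂ : Type) (t₁ : TopologicalSpace X₁) (t₂ : TopologicalSpace X₂)
      (S₁ : @Seat X₁ (Tropical (WithTop ℚ≥0)) t₁ _)
      (S₂ : @Seat X₂ (Tropical (WithTop ℚ≥0)) t₂ _)
      (T : @Seat (X₁ ⊕ X₂) (Tropical (WithTop ℚ≥0))
        (@instTopologicalSpaceSum X₁ X₂ t₁ t₂) _),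
      (∀ (U : Set (X₁ ⊕ X₂)) (x : X₁),
        T.A U (Sum.inl x) = S₁.A (Sum.inl ⁻¹' U) x) ∧
      (∀ (U : Set (X₁ ⊕ X₂)) (y : X₂),
        T.A U (Sum.inr y) = S₂.A (Sum.inr ⁻¹' U) y) ∧
      @SeatUniform (Tropical (WithTop ℚ≥0)) _ X₁ t₁ S₁ ∧
      @SeatUniform (Tropical (WithTop ℚ≥0)) _ X₂ t₂ S₂ ∧
      ¬ @SeatUniform (Tropical (WithTop ℚ≥0)) _ (X₁ ⊕ X₂)
          (@instTopologicalSpaceSum X₁ X₂ t₁ t₂) T := by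
  refine ⟨Unit, Unit, ⊥, ⊥, fullSeat, zeroSeat, sumSeat fullSeat zeroSeat,
    fun _ _ => rfl, fun _ _ => rfl, fun _ _ _ _ => rfl, fun _ _ _ _ => rfl, fun h => ?_⟩
  have := h Set.univ isOpen_univ (Sum.inl ()) (Sum.inr ())
  simp only [sumSeat, fullSeat, zeroSeat, Sum.elim_inl, Sum.elim_inr] at this
  have h1 : (1 : Tropical (WithTop ℚ≥0)) ∈ ({0} : Set (Tropical (WithTop ℚ≥0))) :=
    this ▸ Set.mem_univ _
  exact one_ne_zero (Set.mem_singleton_iff.mp h1)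
end

section
/- Global bisimulation invariance: if Z is a global bisimulation (a bisimulation that is additionally left-total and right-total) between K-models M1 and M2 and x1 Z x2, then x1 and x2 satisfy exactly the same formulas of the extended language L_{K∀} which adds the global modality A (x ⊨ Aφ iff every point of the model satisfies φ). -/
open Set Topology

variable {X K : Type*} [TopologicalSpace X] [Semiring K]

/-- A `K`-model: a seat plus a valuation of propositional variables. -/
structure SModel (X : Type*) (K : Type*) [TopologicalSpace X] [Semiring K]
    extends Seat X K where
  V : ℕ → Set X

/-- Formulas of the extended language `L_{K∀}` (with the global modality `all`). -/
inductive FmG (K : Type*) : Type _ where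
  | pv : ℕ → FmG K
  | neg : FmG K → FmG K
  | and : FmG K → FmG K → FmG K
  | box : FmG K → FmG K
  | F : K → FmG K → FmG K
  | all : FmG K → FmG K

/-- Satisfaction of `L_{K∀}`-formulas in a `K`-model. -/
def SatG (M : SModel X K) : X → FmG K → Prop
  | x, .pv n => x ∈ M.V n
  | x, .neg φ => ¬ SatG M x φ
  | x, .and φ ψ => SatG M x φ ∧ SatG M x ψ
  | x, .box φ => ∃ U : Set X, IsOpen U ∧ x ∈ U ∧ ∀ y ∈ U, SatG M y φ
  | x, .F a φ => ∃ U : Set X, IsOpen U ∧ a ∈ M.A U x ∧ ∀ y ∈ U, SatG M y φ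
  | _, .all φ => ∀ y : X, SatG M y φ

/-- Global bisimulation invariance: globally bisimilar points of `K`-models satisfy
exactly the same formulas of `L_{K∀}` (including the global modality). -/
theorem global_bisimulation_invariance {X₁ X₂ : Type*}
    [TopologicalSpace X₁] [TopologicalSpace X₂]
    (M₁ : SModel X₁ K) (M₂ : SModel X₂ K) (Z : X₁ → X₂ → Prop)
    (atomic : ∀ x₁ x₂, Z x₁ x₂ → ∀ p : ℕ, x₁ ∈ M₁.V p ↔ x₂ ∈ M₂.V p)
    (forthOpen : ∀ x₁ x₂, Z x₁ x₂ → ∀ U₁ : Set X₁, IsOpen U₁ → x₁ ∈ U₁ →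
      ∃ U₂ : Set X₂, IsOpen U₂ ∧ x₂ ∈ U₂ ∧ ∀ y₂ ∈ U₂, ∃ y₁ ∈ U₁, Z y₁ y₂)
    (backOpen : ∀ x₁ x₂, Z x₁ x₂ → ∀ U₂ : Set X₂, IsOpen U₂ → x₂ ∈ U₂ →
      ∃ U₁ : Set X₁, IsOpen U₁ ∧ x₁ ∈ U₁ ∧ ∀ y₁ ∈ U₁, ∃ y₂ ∈ U₂, Z y₁ y₂)
    (forthEv : ∀ x₁ x₂, Z x₁ x₂ → ∀ (a : K) (U₁ : Set X₁), IsOpen U₁ → a ∈ M₁.A U₁ x₁ →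
      ∃ U₂ : Set X₂, IsOpen U₂ ∧ a ∈ M₂.A U₂ x₂ ∧ ∀ y₂ ∈ U₂, ∃ y₁ ∈ U₁, Z y₁ y₂)
    (backEv : ∀ x₁ x₂, Z x₁ x₂ → ∀ (a : K) (U₂ : Set X₂), IsOpen U₂ → a ∈ M₂.A U₂ x₂ →
      ∃ U₁ : Set X₁, IsOpen U₁ ∧ a ∈ M₁.A U₁ x₁ ∧ ∀ y₁ ∈ U₁, ∃ y₂ ∈ U₂, Z y₁ y₂)
    (leftTotal : ∀ x₁ : X₁, ∃ x₂ : X₂, Z x₁ x₂)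
    (rightTotal : ∀ x₂ : X₂, ∃ x₁ : X₁, Z x₁ x₂) :
    ∀ (φ : FmG K) (x₁ : X₁) (x₂ : X₂), Z x₁ x₂ → (SatG M₁ x₁ φ ↔ SatG M₂ x₂ φ) := by
  intro φ
  induction φ with
  | pv n => intro x₁ x₂ hz; exact atomic x₁ x₂ hz n
  | neg φ ih => intro x₁ x₂ hz; simp only [SatG]; exact not_congr (ih x₁ x₂ hz)
  | and φ ψ ihφ ihψ =>
      intro x₁ x₂ hz; simp only [SatG]
      exact and_congr (ihφ x₁ x₂ hz) (ihψ x₁ x₂ hz)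
  | box φ ih =>
      intro x₁ x₂ hz
      constructor
      · rintro ⟨U₁, hU₁, hx₁, hall⟩
        obtain ⟨U₂, hU₂, hx₂, hback⟩ := forthOpen x₁ x₂ hz U₁ hU₁ hx₁
        exact ⟨U₂, hU₂, hx₂, fun y₂ hy₂ => by
          obtain ⟨y₁, hy₁, hzy⟩ := hback y₂ hy₂
          exact (ih y₁ y₂ hzy).mp (hall y₁ hy₁)⟩
      · rintro ⟨U₂, hU₂, hx₂, hall⟩
        obtain ⟨U₁, hU₁, hx₁, hforth⟩ := backOpen x₁ x₂ hz U₂ hU₂ hx₂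
        exact ⟨U₁, hU₁, hx₁, fun y₁ hy₁ => by
          obtain ⟨y₂, hy₂, hzy⟩ := hforth y₁ hy₁
          exact (ih y₁ y₂ hzy).mpr (hall y₂ hy₂)⟩
  | F a φ ih =>
      intro x₁ x₂ hz
      constructor
      · rintro ⟨U₁, hU₁, ha, hall⟩
        obtain ⟨U₂, hU₂, ha₂, hback⟩ := forthEv x₁ x₂ hz a U₁ hU₁ ha
        exact ⟨U₂, hU₂, ha₂, fun y₂ hy₂ => by
          obtain ⟨y₁, hy₁, hzy⟩ := hback y₂ hy₂
          exact (ih y₁ y₂ hzy).mp (hall y₁ hy₁)⟩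
      · rintro ⟨U₂, hU₂, ha, hall⟩
        obtain ⟨U₁, hU₁, ha₁, hforth⟩ := backEv x₁ x₂ hz a U₂ hU₂ ha
        exact ⟨U₁, hU₁, ha₁, fun y₁ hy₁ => by
          obtain ⟨y₂, hy₂, hzy⟩ := hforth y₁ hy₁
          exact (ih y₁ y₂ hzy).mpr (hall y₂ hy₂)⟩
  | all φ ih =>
      intro x₁ x₂ _
      constructor
      · intro h y₂
        obtain ⟨y₁, hzy⟩ := rightTotal y₂
        exact (ih y₁ y₂ hzy).mp (h y₁)
      · intro h y₁
        obtain ⟨y₂, hzy⟩ := leftTotal y₁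
        exact (ih y₁ y₂ hzy).mpr (h y₂)
end
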